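/- arXiv:math/0012114 — 13 statements merged into one kernel-verified Lean document; each statement's English description precedes it below -/
import Mathlib

section
/- In an almost group, the map ε: G → J defined by ε(g) = g·g^i is multiplicative: ε(g·h) = ε(g)·ε(h) for all g, h in G. -/
/-- Data of an almost group: a binary operation, an `i` operation, and a subset `J`. -/
structure AlmostGroupData (G : Type*) where
  mul : G → G → G
  inv : G → G
  J : Set G

/-- The axioms of an almost group (Definition 2.1). -/
structure IsAlmostGroup {G : Type*} (D : AlmostGroupData G) : Prop where
  mul_assoc : ∀ a b c, D.mul (D.mul a b) c = D.mul a (D.mul b c)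
  inv_bijective : Function.Bijective D.inv
  J_mul_closed : ∀ a ∈ D.J, ∀ b ∈ D.J, D.mul a b ∈ D.J
  J_inv_closed : ∀ a ∈ D.J, D.inv a ∈ D.J
  inv_mul : ∀ a b, D.inv (D.mul a b) = D.mul (D.inv b) (D.inv a)
  J_central : ∀ j ∈ D.J, ∀ g, D.mul j g = D.mul g j
  mul_inv_comm : ∀ g, D.mul g (D.inv g) = D.mul (D.inv g) g
  mul_inv_mem : ∀ g, D.mul g (D.inv g) ∈ D.J
  inv_inv : ∀ g, D.inv (D.inv g) = g

/-- In an almost group, the map `ε(g) = g · g^i` is multiplicative: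
`ε(g · h) = ε(g) · ε(h)`. -/
theorem almostGroup_eps_multiplicative {G : Type*} (D : AlmostGroupData G)
    (hD : IsAlmostGroup D) (g h : G) :
    D.mul (D.mul g h) (D.inv (D.mul g h)) =
      D.mul (D.mul g (D.inv g)) (D.mul h (D.inv h)) := by
  rw [hD.inv_mul, hD.mul_assoc, ← hD.mul_assoc h,
    hD.J_central _ (hD.mul_inv_mem h), ← hD.mul_assoc, ← hD.mul_assoc]
end

section
/- For a finite almost group (G, J) and field k, the function algebra k(G) with pointwise multiplication δ_x·δ_y = δ_{x,y} δ_x, comultiplication Δ(δ_x) = Σ_{x=yz} δ_y ⊗ δ_z, antipode S(δ_x) = δ_{x^i}, counit ε(δ_x) = δ_x if x ∈ J and 0 otherwise, and unit map η(δ_j) = Σ_{z: j = z z^i} δ_z, is an almost Hopf algebra with H_J = k(J). -/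
variable {G k : Type*}

/-- Pointwise product: the linear extension of `δ_x · δ_y = δ_{x,y} δ_x`. -/
def mulF [Mul k] {X : Type*} (f g : X → k) : X → k := fun x => f x * g x

/-- The coproduct of `k(G)`: `Δ(δ_x) = Σ_{x = yz} δ_y ⊗ δ_z`, with
`k(G) ⊗ k(G)` modelled as `G × G → k`. -/
def DeltaF (D : AlmostGroupData G) (f : G → k) : G × G → k := fun p =>
  f (D.mul p.1 p.2)

/-- The antipode of `k(G)`: `S(δ_x) = δ_{x^i}`. -/
def SF (D : AlmostGroupData G) (f : G → k) : G → k := fun x => f (D.inv x)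

/-- The counit of `k(G)`: `ε(δ_x) = δ_x` if `x ∈ J`, else `0` (restriction to `J`). -/
def epsF (D : AlmostGroupData G) (f : G → k) : ↥D.J → k := fun j => f j

/-- The unit of `k(G)`: `η(δ_j) = Σ_{z : j = z z^i} δ_z`. -/
def etaF (D : AlmostGroupData G) (hmem : ∀ g : G, D.mul g (D.inv g) ∈ D.J)
    (h : ↥D.J → k) : G → k := fun z => h ⟨D.mul z (D.inv z), hmem z⟩

/-- For a finite almost group `(G, J)` and a field `k`, the function algebra `k(G)`
with the structure maps above is an almost Hopf algebra with `H_J = k(J)`: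
the product is associative; `H_J` is commutative; `Δ` is coassociative;
`(ε ⊗ id)Δ = τ(id ⊗ ε)Δ`; `·(η ⊗ id) = ·(id ⊗ η)τ`;
`·(S ⊗ id)Δ = ·(id ⊗ S)Δ = η ∘ ε`; and `Δ`, `ε`, `η` are algebra maps. -/
theorem functionAlgebra_isAlmostHopf [Fintype G] [DecidableEq G] [Field k]
    (D : AlmostGroupData G) (hD : IsAlmostGroup D) :
    (∀ f g h : G → k, mulF (mulF f g) h = mulF f (mulF g h)) ∧
    (∀ h h' : ↥D.J → k, mulF h h' = mulF h' h) ∧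
    (∀ (f : G → k) (a b c : G),
      DeltaF D f (D.mul a b, c) = DeltaF D f (a, D.mul b c)) ∧
    (∀ (f : G → k) (j : ↥D.J) (z : G), f (D.mul (j : G) z) = f (D.mul z (j : G))) ∧
    (∀ (h : ↥D.J → k) (f : G → k),
      mulF (etaF D hD.mul_inv_mem h) f = mulF f (etaF D hD.mul_inv_mem h)) ∧
    (∀ (f : G → k) (x : G),
      f (D.mul (D.inv x) x) = etaF D hD.mul_inv_mem (epsF D f) x ∧
      f (D.mul x (D.inv x)) = etaF D hD.mul_inv_mem (epsF D f) x) ∧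
    (∀ f g : G → k, DeltaF D (mulF f g) = mulF (DeltaF D f) (DeltaF D g)) ∧
    (∀ f g : G → k, epsF D (mulF f g) = mulF (epsF D f) (epsF D g)) ∧
    (∀ h h' : ↥D.J → k,
      etaF D hD.mul_inv_mem (mulF h h') =
        mulF (etaF D hD.mul_inv_mem h) (etaF D hD.mul_inv_mem h')) := by
  refine ⟨?_, ?_, ?_, ?_, ?_, ?_, ?_, ?_, ?_⟩
  · intro f g h; funext x; exact mul_assoc _ _ _
  · intro h h'; funext x; exact mul_comm _ _
  · intro f a b c; simp [DeltaF, hD.mul_assoc]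
  · intro f j z; rw [hD.J_central j j.2]
  · intro h f; funext x; exact mul_comm _ _
  · intro f x
    refine ⟨?_, rfl⟩
    simp only [etaF, epsF]
    rw [hD.mul_inv_comm]
  · intro f g; rfl
  · intro f g; rfl
  · intro h h'; rfl
end

section
/- For a finite almost group (G, J) and field k, the almost group algebra kG with Δ(x) = x⊗x, S(x) = x^i, ε(x) = x·x^i, η(j) = j, is an almost Hopf algebra with H_J = kJ. -/
variable {G k : Type*}

section GroupAlgebra
variable [Fintype G] [DecidableEq G] [Field k]
variable (D : AlmostGroupData G)

/-- The convolution product of the almost group algebra `kG` (modelled as `G → k`,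
with `x ∈ G` indexing the basis vector `x`). -/
def mulC (f g : G → k) : G → k := fun x =>
  ∑ y : G, ∑ z : G, if D.mul y z = x then f y * g z else 0

/-- The coproduct of `kG`: `Δ(x) = x ⊗ x`, with `kG ⊗ kG` modelled as `G × G → k`. -/
def DeltaC (f : G → k) : G × G → k := fun p => if p.1 = p.2 then f p.1 else 0

/-- The antipode of `kG`: `S(x) = x^i`. -/
def SC (f : G → k) : G → k := fun x => f (D.inv x)

/-- The counit of `kG`: `ε(x) = x · x^i ∈ kJ`. -/
def epsC [DecidablePred (· ∈ D.J)] (f : G → k) : ↥D.J → k := fun j =>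
  ∑ x : G, if D.mul x (D.inv x) = (j : G) then f x else 0

/-- The unit of `kG`: `η(j) = j`. -/
def etaC [DecidablePred (· ∈ D.J)] (h : ↥D.J → k) : G → k := fun g =>
  if hg : g ∈ D.J then h ⟨g, hg⟩ else 0

/-- The convolution product on `H_J = kJ`. -/
def mulCJ [DecidablePred (· ∈ D.J)] (h h' : ↥D.J → k) : ↥D.J → k := fun j =>
  ∑ a : ↥D.J, ∑ b : ↥D.J, if D.mul (a : G) (b : G) = (j : G) then h a * h' b else 0

/-- The product on `kG ⊗ kG` (modelled as `G × G → k`). -/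
def mulCC (F K : G × G → k) : G × G → k := fun p =>
  ∑ y : G, ∑ z : G, ∑ y' : G, ∑ z' : G,
    if D.mul y z = p.1 ∧ D.mul y' z' = p.2 then F (y, y') * K (z, z') else 0

end GroupAlgebra


section AuxAHA

set_option linter.unusedSectionVars false

variable {α M : Type*} [Fintype α] [DecidableEq α] [AddCommMonoid M]

private lemma sumCollapse (c : α) (P : α → Prop) [DecidablePred P] (v : α → M) :
    ∑ a : α, (if P a then (if c = a then v a else 0) else 0) = if P c then v c else 0 := by
  rw [Finset.sum_congr rfl (fun a _ => show _ = if c = a then (if P a then v a else 0) else 0 by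
    split_ifs <;> rfl)]
  simp

private lemma sumCollapse' (c : α) (P : α → Prop) [DecidablePred P] (v : α → M) :
    ∑ a : α, (if P a then (if a = c then v a else 0) else 0) = if P c then v c else 0 := by
  rw [← sumCollapse c P v]
  exact Finset.sum_congr rfl fun a _ => by
    by_cases h : a = c
    · subst h; rfl
    · simp [h, Ne.symm h]

private lemma sum_comm4 {ι κ : Type*} [Fintype ι] [Fintype κ] (F : ι → ι → κ → κ → M) :
    ∑ a, ∑ b, ∑ y, ∑ z, F a b y z = ∑ y, ∑ z, ∑ a, ∑ b, F a b y z := by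
  calc ∑ a, ∑ b, ∑ y, ∑ z, F a b y z
      = ∑ a, ∑ y, ∑ b, ∑ z, F a b y z :=
        Finset.sum_congr rfl fun a _ => Finset.sum_comm
    _ = ∑ y, ∑ a, ∑ b, ∑ z, F a b y z := Finset.sum_comm
    _ = ∑ y, ∑ a, ∑ z, ∑ b, F a b y z :=
        Finset.sum_congr rfl fun y _ => Finset.sum_congr rfl fun a _ => Finset.sum_comm
    _ = ∑ y, ∑ z, ∑ a, ∑ b, F a b y z :=
        Finset.sum_congr rfl fun y _ => Finset.sum_comm

variable [Fintype G] [DecidableEq G] [Field k] (D : AlmostGroupData G)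

private lemma mulC_assoc' (hassoc : ∀ a b c, D.mul (D.mul a b) c = D.mul a (D.mul b c))
    (f g h : G → k) : mulC D (mulC D f g) h = mulC D f (mulC D g h) := by
  funext x
  have L : mulC D (mulC D f g) h x
      = ∑ z : G, ∑ a : G, ∑ b : G, if D.mul (D.mul a b) z = x then f a * g b * h z else 0 := by
    rw [mulC, Finset.sum_comm]
    refine Finset.sum_congr rfl fun z _ => ?_
    calc ∑ y : G, (if D.mul y z = x then mulC D f g y * h z else 0)
        = ∑ y : G, ∑ a : G, ∑ b : G,
            (if D.mul y z = x then if D.mul a b = y then f a * g b * h z else 0 else 0) := by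
          refine Finset.sum_congr rfl fun y _ => ?_
          split_ifs with hyz
          · rw [mulC, Finset.sum_mul]
            refine Finset.sum_congr rfl fun a _ => ?_
            rw [Finset.sum_mul]
            refine Finset.sum_congr rfl fun b _ => ?_
            split_ifs <;> simp [mul_assoc]
          · simp
      _ = ∑ a : G, ∑ b : G, ∑ y : G,
            (if D.mul y z = x then if D.mul a b = y then f a * g b * h z else 0 else 0) := by
          rw [Finset.sum_comm]
          exact Finset.sum_congr rfl fun a _ => Finset.sum_comm
      _ = _ := Finset.sum_congr rfl fun a _ => Finset.sum_congr rfl fun b _ =>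
            sumCollapse (D.mul a b) (fun y => D.mul y z = x) _
  have R : mulC D f (mulC D g h) x
      = ∑ y : G, ∑ a : G, ∑ b : G, if D.mul y (D.mul a b) = x then f y * (g a * h b) else 0 := by
    rw [mulC]
    refine Finset.sum_congr rfl fun y _ => ?_
    calc ∑ z : G, (if D.mul y z = x then f y * mulC D g h z else 0)
        = ∑ z : G, ∑ a : G, ∑ b : G,
            (if D.mul y z = x then if D.mul a b = z then f y * (g a * h b) else 0 else 0) := by
          refine Finset.sum_congr rfl fun z _ => ?_
          split_ifs with hyz
          · rw [mulC, Finset.mul_sum]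
            refine Finset.sum_congr rfl fun a _ => ?_
            rw [Finset.mul_sum]
            refine Finset.sum_congr rfl fun b _ => ?_
            split_ifs <;> simp
          · simp
      _ = ∑ a : G, ∑ b : G, ∑ z : G,
            (if D.mul y z = x then if D.mul a b = z then f y * (g a * h b) else 0 else 0) := by
          rw [Finset.sum_comm]
          exact Finset.sum_congr rfl fun a _ => Finset.sum_comm
      _ = _ := Finset.sum_congr rfl fun a _ => Finset.sum_congr rfl fun b _ =>
            sumCollapse (D.mul a b) (fun z => D.mul y z = x) _
  rw [L, R, Finset.sum_comm]
  refine Finset.sum_congr rfl fun a _ => Finset.sum_comm.trans ?_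
  refine Finset.sum_congr rfl fun b _ => Finset.sum_congr rfl fun z _ => ?_
  rw [hassoc, mul_assoc]

variable [DecidablePred (· ∈ D.J)] (hD : IsAlmostGroup D)
include hD

private lemma part2 (h h' : ↥D.J → k) : mulCJ D h h' = mulCJ D h' h := by
  funext j
  rw [mulCJ, mulCJ, Finset.sum_comm]
  refine Finset.sum_congr rfl fun a _ => Finset.sum_congr rfl fun b _ => ?_
  rw [hD.J_central _ b.2 a, mul_comm]

private lemma part3 (f : G → k) (a b c : G) :
    (if a = b then DeltaC f (a, c) else 0) = (if b = c then DeltaC f (a, b) else 0) := by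
  unfold DeltaC
  by_cases h1 : a = b <;> by_cases h2 : a = c <;> by_cases h3 : b = c <;> simp_all

private lemma part4 (f : G → k) (j : ↥D.J) (z : G) :
    (∑ x : G, if D.mul x (D.inv x) = (j : G) then DeltaC f (x, z) else 0) =
      ∑ x : G, if D.mul x (D.inv x) = (j : G) then DeltaC f (z, x) else 0 := by
  refine Finset.sum_congr rfl fun x _ => ?_
  by_cases h : x = z
  · subst h; rfl
  · simp [DeltaC, h, Ne.symm h]

private lemma part5 (h : ↥D.J → k) (f : G → k) :
    mulC D (etaC D h) f = mulC D f (etaC D h) := by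
  funext x
  rw [mulC, mulC, Finset.sum_comm]
  refine Finset.sum_congr rfl fun a _ => Finset.sum_congr rfl fun b _ => ?_
  by_cases hb : b ∈ D.J
  · rw [hD.J_central b hb a, mul_comm]
  · simp [etaC, hb]

private lemma sum_over_J (v : G → k) (w : ↥D.J → k) (hw : ∀ a : ↥D.J, v ↑a = w a)
    (hv : ∀ y ∉ D.J, v y = 0) : ∑ y : G, v y = ∑ a : ↥D.J, w a := by
  rw [← Finset.sum_filter_of_ne (p := (· ∈ D.J))
    (fun x _ hx => by by_contra hc; exact hx (hv x hc)),
    Finset.sum_subtype (p := (· ∈ D.J)) (Finset.filter (· ∈ D.J) Finset.univ)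
      (fun x => by simp) v]
  exact Finset.sum_congr rfl fun a _ => hw a

private lemma part6 (f : G → k) (x : G) :
    ((∑ y : G, ∑ z : G, if D.mul y z = x then DeltaC f (D.inv y, z) else 0) =
        etaC D (epsC D f) x) ∧
    ((∑ y : G, ∑ z : G, if D.mul y z = x then DeltaC f (y, D.inv z) else 0) =
        etaC D (epsC D f) x) := by
  have key : ∑ y : G, (if D.mul y (D.inv y) = x then f (D.inv y) else 0)
      = etaC D (epsC D f) x := by
    have e1 : ∀ y : G, (if D.mul y (D.inv y) = x then f (D.inv y) else 0)
        = (fun a => if D.mul a (D.inv a) = x then f a else 0) (D.inv y) := by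
      intro y
      simp only [hD.inv_inv]
      rw [← hD.mul_inv_comm]
    rw [Finset.sum_congr rfl fun y _ => e1 y,
      Fintype.sum_bijective D.inv hD.inv_bijective _
        (fun a => if D.mul a (D.inv a) = x then f a else 0) (fun y => rfl)]
    rw [etaC]
    split_ifs with hx
    · rfl
    · exact Finset.sum_eq_zero fun a _ => by
        split_ifs with ha
        · exact absurd (ha ▸ hD.mul_inv_mem a) hx
        · rfl
  constructor
  · rw [← key]
    refine Finset.sum_congr rfl fun y _ => ?_
    exact sumCollapse (D.inv y) (fun z => D.mul y z = x) (fun z => f (D.inv y))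
  · rw [Finset.sum_comm, ← key]
    refine Finset.sum_congr rfl fun z _ => ?_
    have h1 : ∑ y : G, (if D.mul y z = x then DeltaC f (y, D.inv z) else 0)
        = if D.mul (D.inv z) z = x then f (D.inv z) else 0 :=
      sumCollapse' (D.inv z) (fun y => D.mul y z = x) (fun y => f y)
    rw [h1, ← hD.mul_inv_comm]

private lemma part7 (f g : G → k) :
    DeltaC (mulC D f g) = mulCC D (DeltaC f) (DeltaC g) := by
  funext p
  obtain ⟨p1, p2⟩ := p
  have inner : ∀ y z : G, (∑ y' : G, ∑ z' : G,
      if D.mul y z = p1 ∧ D.mul y' z' = p2 then DeltaC f (y, y') * DeltaC g (z, z') else 0)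
      = if D.mul y z = p1 ∧ D.mul y z = p2 then f y * g z else 0 := by
    intro y z
    calc ∑ y' : G, ∑ z' : G,
        (if D.mul y z = p1 ∧ D.mul y' z' = p2 then DeltaC f (y, y') * DeltaC g (z, z') else 0)
        = ∑ y' : G, ∑ z' : G, (if (D.mul y z = p1 ∧ D.mul y' z' = p2) ∧ y = y' then
            (if z = z' then f y * g z else 0) else 0) := by
          refine Finset.sum_congr rfl fun y' _ => Finset.sum_congr rfl fun z' _ => ?_
          by_cases hc : D.mul y z = p1 ∧ D.mul y' z' = p2
          · by_cases hy : y = y'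
            · subst hy
              rw [if_pos hc, if_pos ⟨hc, rfl⟩]
              by_cases hz : z = z' <;> simp [DeltaC, hz]
            · rw [if_pos hc, if_neg (fun hk => hy hk.2)]
              simp [DeltaC, hy]
          · rw [if_neg hc, if_neg (fun hk => hc hk.1)]
      _ = ∑ y' : G, (if (D.mul y z = p1 ∧ D.mul y' z = p2) ∧ y = y' then f y * g z else 0) :=
          Finset.sum_congr rfl fun y' _ =>
            sumCollapse z (fun z' => (D.mul y z = p1 ∧ D.mul y' z' = p2) ∧ y = y') _
      _ = ∑ y' : G, (if D.mul y z = p1 ∧ D.mul y' z = p2 then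
            (if y = y' then f y * g z else 0) else 0) :=
          Finset.sum_congr rfl fun y' _ => by rw [ite_and]
      _ = if D.mul y z = p1 ∧ D.mul y z = p2 then f y * g z else 0 :=
          sumCollapse y (fun y' => D.mul y z = p1 ∧ D.mul y' z = p2) _
  rw [mulCC]
  simp only
  rw [Finset.sum_congr rfl fun y _ => Finset.sum_congr rfl fun z _ => inner y z]
  rw [DeltaC]
  simp only
  by_cases hp : p1 = p2
  · subst hp
    rw [if_pos rfl, mulC]
    exact Finset.sum_congr rfl fun y _ => Finset.sum_congr rfl fun z _ => by
      split_ifs with h1 h2 <;> simp_all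
  · rw [if_neg hp]
    refine (Finset.sum_eq_zero fun y _ => Finset.sum_eq_zero fun z _ => ?_).symm
    split_ifs with h
    · exact absurd (h.1 ▸ h.2) hp
    · rfl

private lemma part8 (f g : G → k) :
    epsC D (mulC D f g) = mulCJ D (epsC D f) (epsC D g) := by
  funext j
  have key : ∀ y z : G, D.mul (D.mul y z) (D.inv (D.mul y z))
      = D.mul (D.mul y (D.inv y)) (D.mul z (D.inv z)) := by
    intro y z
    rw [hD.inv_mul, hD.mul_assoc, ← hD.mul_assoc z, hD.J_central _ (hD.mul_inv_mem z),
      ← hD.mul_assoc, ← hD.mul_assoc]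
  have L : epsC D (mulC D f g) j = ∑ y : G, ∑ z : G,
      if D.mul (D.mul y (D.inv y)) (D.mul z (D.inv z)) = (j : G) then f y * g z else 0 := by
    rw [epsC]
    calc ∑ x : G, (if D.mul x (D.inv x) = (j : G) then mulC D f g x else 0)
        = ∑ x : G, ∑ y : G, ∑ z : G, (if D.mul x (D.inv x) = (j : G) then
            (if D.mul y z = x then f y * g z else 0) else 0) := by
          refine Finset.sum_congr rfl fun x _ => ?_
          rw [mulC]
          split_ifs <;> simp
      _ = ∑ y : G, ∑ z : G, ∑ x : G, (if D.mul x (D.inv x) = (j : G) then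
            (if D.mul y z = x then f y * g z else 0) else 0) := by
          rw [Finset.sum_comm]
          exact Finset.sum_congr rfl fun y _ => Finset.sum_comm
      _ = ∑ y : G, ∑ z : G, (if D.mul (D.mul y z) (D.inv (D.mul y z)) = (j : G)
            then f y * g z else 0) :=
          Finset.sum_congr rfl fun y _ => Finset.sum_congr rfl fun z _ =>
            sumCollapse (D.mul y z) (fun x => D.mul x (D.inv x) = (j : G)) _
      _ = _ := Finset.sum_congr rfl fun y _ => Finset.sum_congr rfl fun z _ => by rw [key]
  have R : mulCJ D (epsC D f) (epsC D g) j = ∑ y : G, ∑ z : G,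
      if D.mul (D.mul y (D.inv y)) (D.mul z (D.inv z)) = (j : G) then f y * g z else 0 := by
    rw [mulCJ]
    calc ∑ a : ↥D.J, ∑ b : ↥D.J, (if D.mul (a : G) (b : G) = (j : G)
          then epsC D f a * epsC D g b else 0)
        = ∑ a : ↥D.J, ∑ b : ↥D.J, ∑ y : G, ∑ z : G,
            (if (D.mul (a : G) (b : G) = (j : G) ∧
                (⟨D.mul y (D.inv y), hD.mul_inv_mem y⟩ : ↥D.J) = a) then
              (if (⟨D.mul z (D.inv z), hD.mul_inv_mem z⟩ : ↥D.J) = b then f y * g z else 0)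
            else 0) := by
          refine Finset.sum_congr rfl fun a _ => Finset.sum_congr rfl fun b _ => ?_
          split_ifs with hab
          · rw [epsC, epsC, Finset.sum_mul_sum]
            refine Finset.sum_congr rfl fun y _ => Finset.sum_congr rfl fun z _ => ?_
            simp only [Subtype.ext_iff]
            split_ifs <;> simp_all
          · refine (Finset.sum_eq_zero fun y _ => Finset.sum_eq_zero fun z _ => ?_).symm
            rw [if_neg (fun hc => hab hc.1)]
      _ = ∑ y : G, ∑ z : G, ∑ a : ↥D.J, ∑ b : ↥D.J,
            (if (D.mul (a : G) (b : G) = (j : G) ∧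
                (⟨D.mul y (D.inv y), hD.mul_inv_mem y⟩ : ↥D.J) = a) then
              (if (⟨D.mul z (D.inv z), hD.mul_inv_mem z⟩ : ↥D.J) = b then f y * g z else 0)
            else 0) := sum_comm4 _
      _ = ∑ y : G, ∑ z : G, ∑ a : ↥D.J,
            (if (D.mul (a : G) (D.mul z (D.inv z)) = (j : G) ∧
                (⟨D.mul y (D.inv y), hD.mul_inv_mem y⟩ : ↥D.J) = a) then f y * g z else 0) :=
          Finset.sum_congr rfl fun y _ => Finset.sum_congr rfl fun z _ =>
            Finset.sum_congr rfl fun a _ =>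
              sumCollapse (⟨D.mul z (D.inv z), hD.mul_inv_mem z⟩ : ↥D.J)
                (fun b => D.mul (a : G) (b : G) = (j : G) ∧
                  (⟨D.mul y (D.inv y), hD.mul_inv_mem y⟩ : ↥D.J) = a) _
      _ = ∑ y : G, ∑ z : G, ∑ a : ↥D.J,
            (if D.mul (a : G) (D.mul z (D.inv z)) = (j : G) then
              (if (⟨D.mul y (D.inv y), hD.mul_inv_mem y⟩ : ↥D.J) = a then f y * g z else 0)
            else 0) := by
          refine Finset.sum_congr rfl fun y _ => Finset.sum_congr rfl fun z _ =>
            Finset.sum_congr rfl fun a _ => ?_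
          split_ifs <;> simp_all
      _ = _ :=
          Finset.sum_congr rfl fun y _ => Finset.sum_congr rfl fun z _ =>
            sumCollapse (⟨D.mul y (D.inv y), hD.mul_inv_mem y⟩ : ↥D.J)
              (fun a => D.mul (a : G) (D.mul z (D.inv z)) = (j : G)) _
  rw [L, R]

private lemma part9 (h h' : ↥D.J → k) :
    etaC D (mulCJ D h h') = mulC D (etaC D h) (etaC D h') := by
  funext g
  have R : mulC D (etaC D h) (etaC D h') g =
      ∑ a : ↥D.J, ∑ b : ↥D.J, (if D.mul (a : G) (b : G) = g then h a * h' b else 0) := by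
    rw [mulC]
    refine sum_over_J D hD _ _ (fun a => ?_) (fun y hy => ?_)
    · refine sum_over_J D hD _ _ (fun b => ?_) (fun z hz => ?_)
      · simp [etaC, a.2, b.2]
      · simp [etaC, hz]
    · exact Finset.sum_eq_zero fun z _ => by simp [etaC, hy]
  rw [R, etaC]
  split_ifs with hg
  · rfl
  · refine (Finset.sum_eq_zero fun a _ => Finset.sum_eq_zero fun b _ => ?_).symm
    exact if_neg fun hc : D.mul (a : G) (b : G) = g =>
      hg (hc ▸ hD.J_mul_closed _ a.2 _ b.2)

end AuxAHA

/-- For a finite almost group `(G, J)` and a field `k`, the almost group algebra `kG`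
with `Δ(x) = x ⊗ x`, `S(x) = x^i`, `ε(x) = x x^i`, `η(j) = j` is an almost Hopf
algebra with `H_J = kJ`: the product is associative; `kJ` is commutative; `Δ` is
coassociative; `(ε ⊗ id)Δ = τ(id ⊗ ε)Δ`; `·(η ⊗ id) = ·(id ⊗ η)τ`;
`·(S ⊗ id)Δ = ·(id ⊗ S)Δ = η ∘ ε`; and `Δ`, `ε`, `η` are algebra maps. -/
theorem groupAlgebra_isAlmostHopf [Fintype G] [DecidableEq G] [Field k]
    (D : AlmostGroupData G) [DecidablePred (· ∈ D.J)] (hD : IsAlmostGroup D) :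
    (∀ f g h : G → k, mulC D (mulC D f g) h = mulC D f (mulC D g h)) ∧
    (∀ h h' : ↥D.J → k, mulCJ D h h' = mulCJ D h' h) ∧
    (∀ (f : G → k) (a b c : G),
      (if a = b then DeltaC f (a, c) else 0) =
        (if b = c then DeltaC f (a, b) else 0)) ∧
    (∀ (f : G → k) (j : ↥D.J) (z : G),
      (∑ x : G, if D.mul x (D.inv x) = (j : G) then DeltaC f (x, z) else 0) =
        ∑ x : G, if D.mul x (D.inv x) = (j : G) then DeltaC f (z, x) else 0) ∧
    (∀ (h : ↥D.J → k) (f : G → k),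
      mulC D (etaC D h) f = mulC D f (etaC D h)) ∧
    (∀ (f : G → k) (x : G),
      (∑ y : G, ∑ z : G, if D.mul y z = x then DeltaC f (D.inv y, z) else 0) =
          etaC D (epsC D f) x ∧
      (∑ y : G, ∑ z : G, if D.mul y z = x then DeltaC f (y, D.inv z) else 0) =
          etaC D (epsC D f) x) ∧
    (∀ f g : G → k, DeltaC (mulC D f g) = mulCC D (DeltaC f) (DeltaC g)) ∧
    (∀ f g : G → k, epsC D (mulC D f g) = mulCJ D (epsC D f) (epsC D g)) ∧
    (∀ h h' : ↥D.J → k, etaC D (mulCJ D h h') = mulC D (etaC D h) (etaC D h')) :=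
  ⟨fun f g h => mulC_assoc' D hD.mul_assoc f g h,
   fun h h' => part2 D hD h h',
   fun f a b c => part3 D hD f a b c,
   fun f j z => part4 D hD f j z,
   fun h f => part5 D hD h f,
   fun f x => part6 D hD f x,
   fun f g => part7 D hD f g,
   fun f g => part8 D hD f g,
   fun h h' => part9 D hD h h'⟩
end

section
/- In a matched pair of almost groups, for all s ∈ M and w ∈ G, one has (s◁w)^i (s◁w) = s s^i = s^i s. -/
/-- Data of a matched pair of almost groups: two almost groups and two actions. -/
structure MatchedPairData (G M : Type*) where
  DG : AlmostGroupData G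
  DM : AlmostGroupData M
  act : M → G → G      -- ▷ : M × G → G
  coact : M → G → M    -- ◁ : M × G → M

/-- The axioms of a matched pair of almost groups (Definition 4.1). -/
structure IsMatchedPair {G M : Type*} (P : MatchedPairData G M) : Prop where
  almostGroup_G : IsAlmostGroup P.DG
  almostGroup_M : IsAlmostGroup P.DM
  coact_mul : ∀ s u v, P.coact s (P.DG.mul u v) = P.coact (P.coact s u) v
  mul_coact : ∀ s t u, P.coact (P.DM.mul s t) u =
      P.DM.mul (P.coact s (P.act t u)) (P.coact t u)
  mul_act : ∀ s t u, P.act (P.DM.mul s t) u = P.act s (P.act t u)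
  act_mul : ∀ s u v, P.act s (P.DG.mul u v) =
      P.DG.mul (P.act s u) (P.act (P.coact s u) v)
  inv_act : ∀ s u, P.act (P.DM.inv (P.coact s u)) (P.DG.inv (P.act s u)) = P.DG.inv u
  inv_coact : ∀ s u, P.coact (P.DM.inv (P.coact s u)) (P.DG.inv (P.act s u)) = P.DM.inv s
  actJM : ∀ j ∈ P.DM.J, ∀ u, P.act j u = u
  coactJM : ∀ j ∈ P.DM.J, ∀ u, P.coact j u = j
  actJG : ∀ s, ∀ j ∈ P.DG.J, P.act s j = j
  coactJG : ∀ s, ∀ j ∈ P.DG.J, P.coact s j = s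

/-- In a matched pair of almost groups, `(s ◁ w)^i (s ◁ w) = s s^i = s^i s`. -/
theorem matchedPair_coact_inv_mul {G M : Type*} (P : MatchedPairData G M)
    (hP : IsMatchedPair P) (s : M) (w : G) :
    P.DM.mul (P.DM.inv (P.coact s w)) (P.coact s w) = P.DM.mul s (P.DM.inv s) ∧
      P.DM.mul s (P.DM.inv s) = P.DM.mul (P.DM.inv s) s := by
  have hG := hP.almostGroup_G
  have hM := hP.almostGroup_M
  refine ⟨?_, hM.mul_inv_comm s⟩
  -- s^i s ∈ J_M
  have hJM : P.DM.mul (P.DM.inv s) s ∈ P.DM.J := by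
    rw [← hM.mul_inv_comm]; exact hM.mul_inv_mem s
  -- (s▷w)^i (s▷w) ∈ J_G
  have hJG : P.DG.mul (P.DG.inv (P.act s w)) (P.act s w) ∈ P.DG.J := by
    rw [← hG.mul_inv_comm]; exact hG.mul_inv_mem _
  -- s^i ◁ (s▷w) = (s◁w)^i
  have key : P.coact (P.DM.inv s) (P.act s w) = P.DM.inv (P.coact s w) := by
    calc P.coact (P.DM.inv s) (P.act s w)
        = P.coact (P.coact (P.DM.inv (P.coact s w)) (P.DG.inv (P.act s w))) (P.act s w) := by
          rw [hP.inv_coact]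
      _ = P.coact (P.DM.inv (P.coact s w))
            (P.DG.mul (P.DG.inv (P.act s w)) (P.act s w)) := by
          rw [hP.coact_mul]
      _ = P.DM.inv (P.coact s w) := hP.coactJG _ _ hJG
  have h1 : P.coact (P.DM.mul (P.DM.inv s) s) w
      = P.DM.mul (P.DM.inv (P.coact s w)) (P.coact s w) := by
    rw [hP.mul_coact, key]
  have h2 : P.coact (P.DM.mul (P.DM.inv s) s) w = P.DM.mul (P.DM.inv s) s :=
    hP.coactJM _ hJM w
  rw [← h1, h2, ← hM.mul_inv_comm]
end

section
/- In a matched pair of almost groups, for all s ∈ M and w ∈ G, one has (s▷w)(s▷w)^i = w w^i = w^i w. -/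
/-- In a matched pair of almost groups, `(s ▷ w)(s ▷ w)^i = w w^i = w^i w`. -/
theorem matchedPair_act_mul_inv {G M : Type*} (P : MatchedPairData G M)
    (hP : IsMatchedPair P) (s : M) (w : G) :
    P.DG.mul (P.act s w) (P.DG.inv (P.act s w)) = P.DG.mul w (P.DG.inv w) ∧
      P.DG.mul w (P.DG.inv w) = P.DG.mul (P.DG.inv w) w := by
  refine ⟨?_, hP.almostGroup_G.mul_inv_comm w⟩
  have hkey : P.act (P.coact s w) (P.DG.inv w) = P.DG.inv (P.act s w) := by
    conv_lhs => rw [← hP.inv_act s w, ← hP.mul_act]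
    exact hP.actJM _ (hP.almostGroup_M.mul_inv_mem (P.coact s w)) _
  have h1 : P.act s (P.DG.mul w (P.DG.inv w)) = P.DG.mul w (P.DG.inv w) :=
    hP.actJG s _ (hP.almostGroup_G.mul_inv_mem w)
  rw [hP.act_mul, hkey] at h1
  exact h1
end

section
/- In the doublecross product almost group G ⋈ M of a matched pair, the involution satisfies ((u,s)^i)^i = (u,s) for all u ∈ G, s ∈ M. -/
variable {G M : Type*} (P : MatchedPairData G M)

/-- Multiplication on the doublecross product `G ⋈ M`. -/
def dcMul (x y : G × M) : G × M :=
  (P.DG.mul x.1 (P.act x.2 y.1), P.DM.mul (P.coact x.2 y.1) y.2)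

/-- The `i` operation on the doublecross product `G ⋈ M`. -/
def dcInv (x : G × M) : G × M :=
  (P.act (P.DM.inv x.2) (P.DG.inv x.1), P.coact (P.DM.inv x.2) (P.DG.inv x.1))

/-- The almost group data of the doublecross product `G ⋈ M`. -/
def dcData : AlmostGroupData (G × M) :=
  ⟨dcMul P, dcInv P, {p | p.1 ∈ P.DG.J ∧ p.2 ∈ P.DM.J}⟩

/-- In the doublecross product `G ⋈ M` of a matched pair, the involution satisfies
`((u,s)^i)^i = (u,s)`. -/
theorem doublecross_inv_inv (hP : IsMatchedPair P) (u : G) (s : M) :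
    dcInv P (dcInv P (u, s)) = (u, s) := by
  have h1 := hP.inv_act (P.DM.inv s) (P.DG.inv u)
  have h2 := hP.inv_coact (P.DM.inv s) (P.DG.inv u)
  simp only [dcInv, h1, h2, hP.almostGroup_G.inv_inv, hP.almostGroup_M.inv_inv]
end

section
/- For a matched pair of finite almost groups, the bicrossproduct H = kM ⋉ k(G) with basis s⊗δ_u and product (s⊗δ_u)(t⊗δ_v) = δ_{u, t▷v} (st⊗δ_v) is an associative algebra, and the coproduct Δ(s⊗δ_u) = Σ_{xy=u} s⊗δ_x ⊗ (s◁x)⊗δ_y is coassociative and an algebra map. -/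
variable {G M k : Type*} [Fintype G] [Fintype M] [DecidableEq G] [DecidableEq M] [Field k]
variable (P : MatchedPairData G M)

/-- The product of `H = kM ⋉ k(G)`, given on the basis by
`(s ⊗ δ_u)(t ⊗ δ_v) = δ_{u, t ▷ v} (st ⊗ δ_v)`.  Here `H` is modelled as `M × G → k`,
with `(s, u)` indexing the basis vector `s ⊗ δ_u`. -/
def mulH (F K : M × G → k) : M × G → k := fun p =>
  ∑ s : M, ∑ t : M, if P.DM.mul s t = p.1 then F (s, P.act t p.2) * K (t, p.2) else 0

/-- The coproduct of `H = kM ⋉ k(G)`, given on the basis by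
`Δ(s ⊗ δ_u) = Σ_{xy=u} (s ⊗ δ_x) ⊗ ((s ◁ x) ⊗ δ_y)`.  `H ⊗ H` is modelled as
`(M × G) × (M × G) → k`. -/
def DeltaH (F : M × G → k) : (M × G) × (M × G) → k := fun q =>
  if q.2.1 = P.coact q.1.1 q.1.2 then F (q.1.1, P.DG.mul q.1.2 q.2.2) else 0

/-- The product on `H ⊗ H` (modelled as `(M × G) × (M × G) → k`). -/
def mulHH (Phi Psi : (M × G) × (M × G) → k) : (M × G) × (M × G) → k := fun q =>
  ∑ s : M, ∑ t : M, ∑ s' : M, ∑ t' : M,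
    if P.DM.mul s t = q.1.1 ∧ P.DM.mul s' t' = q.2.1 then
      Phi ((s, P.act t q.1.2), (s', P.act t' q.2.2)) * Psi ((t, q.1.2), (t', q.2.2))
    else 0


private lemma ite_sum_zero {A K : Type*} [AddCommMonoid K] [Fintype A]
    (c : Prop) [Decidable c] (f : A → K) :
    (if c then ∑ x, f x else 0) = ∑ x, if c then f x else 0 := by
  split <;> simp

private lemma collapse_sum {A K : Type*} [AddCommMonoid K] [Fintype A] [DecidableEq A]
    (c : A) (Q : A → Prop) [DecidablePred Q] (x : A → K) :
    (∑ a : A, if Q a then (if c = a then x a else 0) else 0) = if Q c then x c else 0 := by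
  rw [Finset.sum_eq_single c]
  · simp
  · intro b _ hb
    rw [if_neg (Ne.symm hb), ite_self]
  · simp


private lemma collapse_mul_right {A K : Type*} [NonAssocSemiring K] [Fintype A]
    [DecidableEq A] (c : A) (C : A → Prop) [DecidablePred C] (f : A → K) (x : K) :
    (∑ a : A, if C a then f a * (if a = c then x else 0) else 0) = if C c then f c * x else 0 := by
  rw [Finset.sum_eq_single c]
  · simp
  · intro b _ hb; simp [hb]
  · simp

private lemma collapse_mul_left {A K : Type*} [NonAssocSemiring K] [Fintype A]
    [DecidableEq A] (c : A) (C : A → Prop) [DecidablePred C] (x g : A → K) :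
    (∑ a : A, if C a then (if a = c then x a else 0) * g a else 0) = if C c then x c * g c else 0 := by
  rw [Finset.sum_eq_single c]
  · simp
  · intro b _ hb; simp [hb]
  · simp

/-- For a matched pair of finite almost groups, the bicrossproduct `H = kM ⋉ k(G)` with
product `(s ⊗ δ_u)(t ⊗ δ_v) = δ_{u, t▷v}(st ⊗ δ_v)` is an associative algebra, and the
coproduct `Δ(s ⊗ δ_u) = Σ_{xy=u} (s ⊗ δ_x) ⊗ ((s ◁ x) ⊗ δ_y)` is coassociative,
i.e. `(Δ ⊗ id)Δ = (id ⊗ Δ)Δ`, and is an algebra map. -/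
theorem bicross_assoc_coassoc_algebraMap (hP : IsMatchedPair P) :
    (∀ F K L : M × G → k, mulH P (mulH P F K) L = mulH P F (mulH P K L)) ∧
    (∀ (F : M × G → k) (p q r : M × G),
      (if q.1 = P.coact p.1 p.2 then DeltaH P F ((p.1, P.DG.mul p.2 q.2), r) else 0) =
        (if r.1 = P.coact q.1 q.2 then DeltaH P F (p, (q.1, P.DG.mul q.2 r.2)) else 0)) ∧
    (∀ F K : M × G → k, DeltaH P (mulH P F K) = mulHH P (DeltaH P F) (DeltaH P K)) := by
  obtain ⟨hG, hM, hcm, hmc, hma, ham, _, _, _, _, _, _⟩ := hP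
  refine ⟨?_, ?_, ?_⟩
  · intro F K L
    funext p
    simp only [mulH, Finset.sum_mul, ite_mul, zero_mul, Finset.mul_sum, mul_ite, mul_zero,
      ite_sum_zero]
    conv_lhs => rw [Finset.sum_comm]; enter [2, b]; rw [Finset.sum_comm]; enter [2, s]; rw [Finset.sum_comm]
    conv_rhs => enter [2, s]; rw [Finset.sum_comm]; enter [2, t]; rw [Finset.sum_comm]
    simp only [collapse_sum]
    rw [Finset.sum_comm]
    conv_lhs => enter [2, s]; rw [Finset.sum_comm]
    refine Finset.sum_congr rfl fun s _ => Finset.sum_congr rfl fun t _ =>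
      Finset.sum_congr rfl fun b _ => ?_
    rw [hM.mul_assoc, hma, mul_assoc]
  · intro F p q r
    simp only [DeltaH]
    by_cases h1 : q.1 = P.coact p.1 p.2
    · have h3 : P.coact p.1 (P.DG.mul p.2 q.2) = P.coact q.1 q.2 := by rw [hcm, ← h1]
      rw [h3, hG.mul_assoc]
      simp [h1]
    · simp [h1]
  · intro F K
    funext q
    obtain ⟨⟨a, u⟩, b, v⟩ := q
    simp only [DeltaH, mulH, mulHH, ite_sum_zero, collapse_mul_right, collapse_mul_left,
      ← hmc, ← ham]
    refine Finset.sum_congr rfl fun s _ => Finset.sum_congr rfl fun t _ => ?_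
    by_cases h : P.DM.mul s t = a
    · rw [h]
      by_cases h2 : b = P.coact a u <;> simp [h2, eq_comm]
    · simp [h]
end

section
/- In the bicrossproduct H = kM ⋉ k(G), the counit ε(s⊗δ_u) = ss^i⊗δ_u if u ∈ J_G (and 0 otherwise) is an algebra map into H_J = kJ_M ⊗ k(J_G). -/
variable {G M k : Type*} [Fintype G] [Fintype M] [DecidableEq G] [DecidableEq M] [Field k]
variable (P : MatchedPairData G M)

/-- The counit `ε : H → H_J = kJ_M ⊗ k(J_G)`, `ε(s ⊗ δ_u) = ss^i ⊗ δ_u` if `u ∈ J_G`,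
and `0` otherwise; its image is viewed inside `H` (supported on `J_M × J_G`). -/
def epsH [DecidablePred (· ∈ P.DG.J)] (F : M × G → k) : M × G → k := fun p =>
  if p.2 ∈ P.DG.J then
    ∑ s : M, if P.DM.mul s (P.DM.inv s) = p.1 then F (s, p.2) else 0
  else 0

/-- In the bicrossproduct `H = kM ⋉ k(G)`, the counit
`ε(s ⊗ δ_u) = ss^i ⊗ δ_u` if `u ∈ J_G` (and `0` otherwise) is an algebra map into
`H_J = kJ_M ⊗ k(J_G)` (whose product is inherited from `H`): its image is supported on
`J_M × J_G`, and it is multiplicative. -/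
theorem bicross_counit_algebraMap [DecidablePred (· ∈ P.DG.J)]
    [DecidablePred (· ∈ P.DM.J)] (hP : IsMatchedPair P) :
    (∀ (F : M × G → k) (p : M × G), epsH P F p ≠ 0 → p.1 ∈ P.DM.J ∧ p.2 ∈ P.DG.J) ∧
    (∀ F K : M × G → k, epsH P (mulH P F K) = mulH P (epsH P F) (epsH P K)) := by
  have hM := hP.almostGroup_M
  -- key identity: (ab)(ab)^i = (a a^i)(b b^i)
  have key : ∀ a b : M, P.DM.mul (P.DM.mul a b) (P.DM.inv (P.DM.mul a b))
      = P.DM.mul (P.DM.mul a (P.DM.inv a)) (P.DM.mul b (P.DM.inv b)) := by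
    intro a b
    rw [hM.inv_mul, hM.mul_assoc, ← hM.mul_assoc b, ← hM.mul_assoc a, hM.mul_assoc a,
      hM.J_central _ (hM.mul_inv_mem b), ← hM.mul_assoc]
  constructor
  · intro F p h
    by_cases hu : p.2 ∈ P.DG.J
    · refine ⟨?_, hu⟩
      simp only [epsH, if_pos hu] at h
      obtain ⟨s, -, hs⟩ := Finset.exists_ne_zero_of_sum_ne_zero h
      by_cases hc : P.DM.mul s (P.DM.inv s) = p.1
      · exact hc ▸ hM.mul_inv_mem s
      · simp [hc] at hs
    · simp [epsH, hu] at h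
  · intro F K
    funext p
    obtain ⟨m, u⟩ := p
    by_cases hu : u ∈ P.DG.J
    · have hact : ∀ t : M, P.act t u = u := fun t => hP.actJG t u hu
      simp only [epsH, mulH, hact, if_pos hu]
      -- LHS: ∑ s, [s s^i = m] ∑ a ∑ b [ab = s] F(a,u) K(b,u)
      -- RHS: ∑ s ∑ t [st = m] (∑ a [a a^i = s] F(a,u)) (∑ b [b b^i = t] K(b,u))
      have L : (∑ s : M, if P.DM.mul s (P.DM.inv s) = m then
            ∑ a : M, ∑ b : M, if P.DM.mul a b = s then F (a, u) * K (b, u) else 0 else 0)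
          = ∑ a : M, ∑ b : M,
            if P.DM.mul (P.DM.mul a b) (P.DM.inv (P.DM.mul a b)) = m
              then F (a, u) * K (b, u) else 0 := by
        have step : ∀ s : M, (if P.DM.mul s (P.DM.inv s) = m then
              ∑ a : M, ∑ b : M, if P.DM.mul a b = s then F (a, u) * K (b, u) else 0 else 0)
            = ∑ a : M, ∑ b : M, if P.DM.mul a b = s then
                (if P.DM.mul s (P.DM.inv s) = m then F (a, u) * K (b, u) else 0) else 0 := by
          intro s; split <;> simp
        rw [Finset.sum_congr rfl fun s _ => step s, Finset.sum_comm]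
        refine Finset.sum_congr rfl fun a _ => ?_
        rw [Finset.sum_comm]
        refine Finset.sum_congr rfl fun b _ => ?_
        rw [Finset.sum_ite_eq]
        simp
      have R : (∑ s : M, ∑ t : M, if P.DM.mul s t = m then
            (∑ a : M, if P.DM.mul a (P.DM.inv a) = s then F (a, u) else 0) *
            (∑ b : M, if P.DM.mul b (P.DM.inv b) = t then K (b, u) else 0) else 0)
          = ∑ a : M, ∑ b : M,
            if P.DM.mul (P.DM.mul a (P.DM.inv a)) (P.DM.mul b (P.DM.inv b)) = m
              then F (a, u) * K (b, u) else 0 := by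
        have step : ∀ s t : M, (if P.DM.mul s t = m then
              (∑ a : M, if P.DM.mul a (P.DM.inv a) = s then F (a, u) else 0) *
              (∑ b : M, if P.DM.mul b (P.DM.inv b) = t then K (b, u) else 0) else 0)
            = ∑ a : M, ∑ b : M,
              if P.DM.mul a (P.DM.inv a) = s then
                (if P.DM.mul b (P.DM.inv b) = t then
                  (if P.DM.mul s t = m then F (a, u) * K (b, u) else 0) else 0) else 0 := by
          intro s t
          split_ifs with h
          · rw [Finset.sum_mul_sum]
            exact Finset.sum_congr rfl fun a _ => Finset.sum_congr rfl fun b _ => by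
              split_ifs <;> simp_all
          · simp
        rw [Finset.sum_congr rfl fun s _ => Finset.sum_congr rfl fun t _ => step s t]
        rw [Finset.sum_congr rfl fun s _ => Finset.sum_comm (γ := M)]
        rw [Finset.sum_comm]
        refine Finset.sum_congr rfl fun a _ => ?_
        rw [Finset.sum_congr rfl fun s _ => Finset.sum_comm (γ := M), Finset.sum_comm]
        refine Finset.sum_congr rfl fun b _ => ?_
        rw [Finset.sum_comm]
        simp [Finset.sum_ite_eq]
      rw [L, R]
      exact Finset.sum_congr rfl fun a _ => Finset.sum_congr rfl fun b _ => by rw [key a b]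
    · simp [epsH, mulH, hu]
end

section
/- In the bicrossproduct H = kM ⋉ k(G), the antipode S(s⊗δ_u) = (s◁u)^i ⊗ δ_{(s▷u)^i} reverses the product: S((s⊗δ_u)(t⊗δ_v)) = S(t⊗δ_v)S(s⊗δ_u), and reverses the coproduct: τΔS = (S⊗S)Δ. -/
variable {G M k : Type*} [Fintype G] [Fintype M] [DecidableEq G] [DecidableEq M] [Field k]
variable (P : MatchedPairData G M)

/-- The antipode on basis elements: `S(s ⊗ δ_u) = (s ◁ u)^i ⊗ δ_{(s ▷ u)^i}`. -/
def bS (b : M × G) : M × G :=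
  (P.DM.inv (P.coact b.1 b.2), P.DG.inv (P.act b.1 b.2))

/-- The antipode of `H = kM ⋉ k(G)`, the linear extension of `bS`. -/
def SH (F : M × G → k) : M × G → k := fun p =>
  ∑ b : M × G, if bS P b = p then F b else 0

/-! The basis map `bS` is an involution (this is what `inv_act` and `inv_coact` say), so `S` is
precomposition with `bS`. Reversal of the coproduct is then a direct computation with `coact_mul`,
`act_mul` and `(uv)^i = v^i u^i`. For the product, the factorisations `st = a` are matched with
the factorisations of `(a ◁ w)^i` by `(s, t) ↦ ((t ◁ w)^i, (s ◁ (t ▷ w))^i)`, a bijection by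
`mul_coact`, `mul_act` and the involutivity of `bS`. -/

open Finset

section Antipode

variable {P}

theorem bS_involutive {G M : Type*} {P : MatchedPairData G M} (hP : IsMatchedPair P) :
    Function.Involutive (bS P) := by
  rintro ⟨s, u⟩
  simp only [bS]
  rw [hP.inv_coact, hP.inv_act, hP.almostGroup_M.inv_inv, hP.almostGroup_G.inv_inv]

theorem SH_apply (hP : IsMatchedPair P) (F : M × G → k) (p : M × G) :
    SH P F p = F (bS P p) := by
  simp only [SH, (bS_involutive hP).eq_iff, Fintype.sum_ite_eq']

theorem sum_sum_ite_bS (hP : IsMatchedPair P) (Φ : (M × G) × (M × G) → k) (p q : M × G) :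
    (∑ a : M × G, ∑ b : M × G, if bS P a = p ∧ bS P b = q then Φ (a, b) else 0) =
      Φ (bS P p, bS P q) := by
  simp only [(bS_involutive hP).eq_iff, ite_and, sum_ite_irrel, Fintype.sum_ite_eq',
    sum_const_zero]

theorem DeltaH_SH (hP : IsMatchedPair P) (F : M × G → k) (p q : M × G) :
    DeltaH P (SH P F) (q, p) = DeltaH P F (bS P p, bS P q) := by
  obtain ⟨s, u⟩ := q
  obtain ⟨m, v⟩ := p
  have hinv : Function.Injective P.DM.inv := hP.almostGroup_M.inv_bijective.injective
  simp only [DeltaH, bS, SH_apply hP, hP.inv_coact m v, hinv.eq_iff, eq_comm (a := m)]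
  split_ifs with hm
  · subst hm
    rw [hP.coact_mul, hP.act_mul, hP.almostGroup_G.inv_mul]
  · rfl

end Antipode

section Product

def reverseFactors (w : G) (x : M × M) : M × M :=
  (P.DM.inv (P.coact x.2 w), P.DM.inv (P.coact x.1 (P.act x.2 w)))

variable {P}

theorem mul_reverseFactors {G M : Type*} {P : MatchedPairData G M} (hP : IsMatchedPair P)
    (w : G) (x : M × M) :
    P.DM.mul (reverseFactors P w x).1 (reverseFactors P w x).2 =
      (bS P (P.DM.mul x.1 x.2, w)).1 := by
  rw [reverseFactors, bS, ← hP.almostGroup_M.inv_mul, hP.mul_coact]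

theorem reverseFactors_reverseFactors {G M : Type*} {P : MatchedPairData G M}
    (hP : IsMatchedPair P) (w : G) (x : M × M) :
    reverseFactors P (bS P (P.DM.mul x.1 x.2, w)).2 (reverseFactors P w x) = x := by
  obtain ⟨s, t⟩ := x
  simp only [reverseFactors, bS, hP.mul_act]
  rw [hP.inv_coact, hP.almostGroup_M.inv_inv, hP.inv_act, hP.inv_coact, hP.almostGroup_M.inv_inv]

theorem SH_mulH (hP : IsMatchedPair P) (F K : M × G → k) :
    SH P (mulH P F K) = mulH P (SH P K) (SH P F) := by
  have hS := bS_involutive hP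
  funext p
  obtain ⟨⟨a, w⟩, rfl⟩ := hS.surjective p
  simp only [SH_apply hP, hS (a, w), mulH]
  rw [← Fintype.sum_prod_type', ← Fintype.sum_prod_type', ← sum_filter, ← sum_filter]
  refine sum_nbij' (reverseFactors P w) (reverseFactors P (bS P (a, w)).2)
    (fun x hx => ?_) (fun y hy => ?_) (fun x hx => ?_) (fun y hy => ?_) (fun x hx => ?_)
  · rw [mem_filter_univ] at hx ⊢
    rw [mul_reverseFactors hP, hx]
  · rw [mem_filter_univ] at hy ⊢
    rw [mul_reverseFactors hP, hy, hS]
  · rw [mem_filter_univ] at hx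
    simpa only [hx] using reverseFactors_reverseFactors hP w x
  · rw [mem_filter_univ] at hy
    simpa only [hy, hS (a, w)] using reverseFactors_reverseFactors hP (bS P (a, w)).2 y
  · obtain ⟨s, t⟩ := x
    rw [mem_filter_univ] at hx
    subst hx
    simp only [reverseFactors, bS, hP.mul_act, hP.inv_act, hP.inv_coact, hP.almostGroup_M.inv_inv,
      hP.almostGroup_G.inv_inv]
    exact mul_comm _ _

end Product

/-- In the bicrossproduct `H = kM ⋉ k(G)`, the antipode
`S(s ⊗ δ_u) = (s ◁ u)^i ⊗ δ_{(s ▷ u)^i}` reverses the product, `S(FK) = S(K)S(F)`,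
and reverses the coproduct, `τ Δ S = (S ⊗ S) Δ`. -/
theorem bicross_antipode_reverses (hP : IsMatchedPair P) :
    (∀ F K : M × G → k, SH P (mulH P F K) = mulH P (SH P K) (SH P F)) ∧
    (∀ (F : M × G → k) (p q : M × G),
      DeltaH P (SH P F) (q, p) =
        ∑ a : M × G, ∑ b : M × G,
          if bS P a = p ∧ bS P b = q then DeltaH P F (a, b) else 0) :=
  ⟨SH_mulH hP, fun F p q => by rw [DeltaH_SH hP, sum_sum_ite_bS hP]⟩
end

section
/- On the bicrossproduct H = kM ⋉ k(G), the conjugate-linear map defined on basis elements by (s⊗δ_u)* = s^i ⊗ δ_{s▷u} reverses the order of multiplication: ((s⊗δ_u)(t⊗δ_v))* = (t⊗δ_v)*(s⊗δ_u)*. -/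
variable {G M k : Type*} [Fintype G] [Fintype M] [DecidableEq G] [DecidableEq M] [Field k]
variable (P : MatchedPairData G M)

/-- The `*` operation on basis elements: `(s ⊗ δ_u)* = s^i ⊗ δ_{s ▷ u}`;
this map is an involution of `M × G`. -/
def bstar (b : M × G) : M × G := (P.DM.inv b.1, P.act b.1 b.2)

/-- The conjugate-linear `*` operation on `H = kM ⋉ k(G)`. -/
def starH [StarRing k] (F : M × G → k) : M × G → k := fun p => star (F (bstar P p))

/-! Reindex the sum defining `(FK)*` at `(m, u)` by the involution `(s, t) ↦ (t^i, s^i)` of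
`M × M`: since `i` is an involutive anti-automorphism, it matches the pairs with `st = m^i`
with the pairs whose product is `m`. The matched terms agree because `s ▷ (s^i ▷ u) = u`,
`s s^i` lying in `J`, which acts trivially. -/

namespace IsAlmostGroup

variable {A : Type*} {D : AlmostGroupData A}

theorem mul_inv_inv_eq_iff (hD : IsAlmostGroup D) {a b c : A} :
    D.mul (D.inv b) (D.inv a) = c ↔ D.mul a b = D.inv c := by
  rw [← hD.inv_mul]
  exact Function.Involutive.eq_iff hD.inv_inv

theorem involutive_inv_swap (hD : IsAlmostGroup D) :
    Function.Involutive fun q : A × A => (D.inv q.2, D.inv q.1) := fun q => by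
  simp only [hD.inv_inv]

end IsAlmostGroup

theorem IsMatchedPair.act_act_inv {A B : Type*} {Q : MatchedPairData A B}
    (hQ : IsMatchedPair Q) (s : B) (u : A) : Q.act s (Q.act (Q.DM.inv s) u) = u := by
  rw [← hQ.mul_act, hQ.actJM _ (hQ.almostGroup_M.mul_inv_mem s)]

/-- On the bicrossproduct `H = kM ⋉ k(G)`, the conjugate-linear map defined on basis
elements by `(s ⊗ δ_u)* = s^i ⊗ δ_{s ▷ u}` reverses the order of multiplication:
`(FK)* = K* F*`. -/
theorem bicross_star_antimultiplicative [StarRing k] (hP : IsMatchedPair P)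
    (F K : M × G → k) :
    starH P (mulH P F K) = mulH P (starH P K) (starH P F) := by
  have hM := hP.almostGroup_M
  funext ⟨m, u⟩
  simp only [starH, mulH, bstar, star_sum]
  rw [← Fintype.sum_prod_type', ← Fintype.sum_prod_type']
  refine Fintype.sum_bijective _ hM.involutive_inv_swap.bijective _ _ fun ⟨s, t⟩ => ?_
  simp only [hM.mul_inv_inv_eq_iff, hM.inv_inv]
  by_cases hst : P.DM.mul s t = P.DM.inv m
  · simp only [hst, ite_true, star_mul]
    obtain rfl : P.DM.mul (P.DM.inv t) (P.DM.inv s) = m := hM.mul_inv_inv_eq_iff.mpr hst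
    rw [hP.mul_act, hP.act_act_inv]
  · simp only [hst, ite_false, star_zero]
end

section
/- On the bicrossproduct H = kM ⋉ k(G), the map (s⊗δ_u)* = s^i ⊗ δ_{s▷u} preserves the comultiplication: Δ((s⊗δ_u)*) = (Δ(s⊗δ_u))* (where * acts factorwise on H⊗H). -/
variable {G M k : Type*} [Fintype G] [Fintype M] [DecidableEq G] [DecidableEq M] [Field k]
variable (P : MatchedPairData G M)

/-- The factorwise `*` operation on `H ⊗ H`. -/
def starHH [StarRing k] (Phi : (M × G) × (M × G) → k) : (M × G) × (M × G) → k :=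
  fun q => star (Phi (bstar P q.1, bstar P q.2))

/-!
Both sides vanish off the coproduct's support condition. For `Δ(F*)` that condition at
`((s, x), (t, y))` reads `t^i = s^i ◁ (s ▷ x)`, and the identity `s^i ◁ (s ▷ x) = (s ◁ x)^i`,
obtained from the inversion axioms of the matched pair, turns it into `t = s ◁ x`, the condition
for `(ΔF)*`. On the support the values agree because `s ▷ (xy) = (s ▷ x)((s ◁ x) ▷ y)`.
-/

theorem IsAlmostGroup.inv_mul_mem {α : Type*} {D : AlmostGroupData α} (hD : IsAlmostGroup D)
    (g : α) :
    D.mul (D.inv g) g ∈ D.J :=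
  hD.mul_inv_comm g ▸ hD.mul_inv_mem g

namespace IsMatchedPair

variable {α β : Type*} {P : MatchedPairData α β}

theorem act_inv_act (hP : IsMatchedPair P) (s : β) (u : α) :
    P.act (P.DM.inv s) (P.act s u) = u := by
  rw [← hP.mul_act, hP.actJM _ (hP.almostGroup_M.inv_mul_mem s)]

theorem coact_inv_act (hP : IsMatchedPair P) (s : β) (x : α) :
    P.coact (P.DM.inv s) (P.act s x) = P.DM.inv (P.coact s x) := by
  have hG := hP.almostGroup_G
  have hM := hP.almostGroup_M
  set t := P.coact (P.DM.inv s) (P.act s x)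
  set v := P.DG.inv (P.act s x)
  -- Apply the inversion axioms of the matched pair to `(t, v)`, where `t ◁ v = s^i`.
  have ht : P.coact t v = P.DM.inv s := by
    rw [← hP.coact_mul, hP.coactJG _ _ (hG.mul_inv_mem _)]
  have hcoact := hP.inv_coact t v
  have hact := hP.inv_act t v
  rw [ht, hM.inv_inv] at hcoact hact
  rw [hG.inv_inv] at hact
  have hx : P.DG.inv (P.act t v) = x := by
    simpa only [hP.act_inv_act] using congrArg (P.act (P.DM.inv s)) hact
  rw [hx] at hcoact
  rw [hcoact, hM.inv_inv]

theorem inv_eq_coact_inv_act_iff (hP : IsMatchedPair P) (s t : β) (x : α) :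
    P.DM.inv t = P.coact (P.DM.inv s) (P.act s x) ↔ t = P.coact s x := by
  rw [hP.coact_inv_act, hP.almostGroup_M.inv_bijective.injective.eq_iff]

end IsMatchedPair

/-- On the bicrossproduct `H = kM ⋉ k(G)`, the map `(s ⊗ δ_u)* = s^i ⊗ δ_{s ▷ u}`
preserves the comultiplication: `Δ(F*) = (Δ F)*`, where `*` acts factorwise on
`H ⊗ H`. -/
theorem bicross_star_comultiplicative [StarRing k] (hP : IsMatchedPair P)
    (F : M × G → k) :
    DeltaH P (starH P F) = starHH P (DeltaH P F) := by
  funext ⟨⟨s, x⟩, t, y⟩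
  simp only [DeltaH, starH, starHH, bstar, hP.inv_eq_coact_inv_act_iff]
  split_ifs with h
  · rw [h, hP.act_mul]
  · rw [star_zero]
end

section
/- On the bicrossproduct H = kM ⋉ k(G), the * operation satisfies S((s⊗δ_u)*) = (S(s⊗δ_u))*, where S(s⊗δ_u) = (s◁u)^i ⊗ δ_{(s▷u)^i} and (s⊗δ_u)* = s^i⊗δ_{s▷u}; explicitly both sides equal (s◁u) ⊗ δ_{u^i}. -/
variable {G M k : Type*} [Fintype G] [Fintype M] [DecidableEq G] [DecidableEq M] [Field k]
variable (P : MatchedPairData G M)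

section Aux

variable {P}

lemma aux_act_inv_act (hP : IsMatchedPair P) (s : M) (u : G) :
    P.act (P.DM.inv s) (P.act s u) = u := by
  have hJ : P.DM.mul (P.DM.inv s) s ∈ P.DM.J := by
    rw [← hP.almostGroup_M.mul_inv_comm]
    exact hP.almostGroup_M.mul_inv_mem s
  have h1 := hP.actJM _ hJ u
  rw [hP.mul_act] at h1
  exact h1

lemma aux_coact_inv_act (hP : IsMatchedPair P) (s : M) (u : G) :
    P.coact (P.DM.inv s) (P.act s u) = P.DM.inv (P.coact s u) := by
  have hJ : P.DG.mul (P.DG.inv (P.act s u)) (P.act s u) ∈ P.DG.J := by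
    rw [← hP.almostGroup_G.mul_inv_comm]
    exact hP.almostGroup_G.mul_inv_mem _
  have h1 := hP.coactJG (P.DM.inv (P.coact s u)) _ hJ
  rw [hP.coact_mul, hP.inv_coact] at h1
  exact h1

lemma aux_bS_bstar (hP : IsMatchedPair P) (s : M) (u : G) :
    bS P (bstar P (s, u)) = (P.coact s u, P.DG.inv u) := by
  simp only [bS, bstar, aux_coact_inv_act hP, aux_act_inv_act hP,
    hP.almostGroup_M.inv_inv]

lemma aux_bstar_bS (hP : IsMatchedPair P) (s : M) (u : G) :
    bstar P (bS P (s, u)) = (P.coact s u, P.DG.inv u) := by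
  simp only [bS, bstar, hP.almostGroup_M.inv_inv, hP.inv_act]

lemma aux_bstar_invol (hP : IsMatchedPair P) (b : M × G) :
    bstar P (bstar P b) = b := by
  simp only [bstar, hP.almostGroup_M.inv_inv, aux_act_inv_act hP]

end Aux

/-- On the bicrossproduct `H = kM ⋉ k(G)`, the `*` operation satisfies
`S(F*) = (S F)*`; explicitly, on basis elements both sides equal
`(s ◁ u) ⊗ δ_{u^i}`. -/
theorem bicross_star_antipode [StarRing k] (hP : IsMatchedPair P) :
    (∀ F : M × G → k, SH P (starH P F) = starH P (SH P F)) ∧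
    (∀ s : M, ∀ u : G,
      bS P (bstar P (s, u)) = (P.coact s u, P.DG.inv u) ∧
      bstar P (bS P (s, u)) = (P.coact s u, P.DG.inv u)) := by
  refine ⟨fun F => ?_, fun s u => ⟨aux_bS_bstar hP s u, aux_bstar_bS hP s u⟩⟩
  funext p
  let e : M × G ≃ M × G :=
    ⟨bstar P, bstar P, aux_bstar_invol hP, aux_bstar_invol hP⟩
  calc SH P (starH P F) p
      = ∑ b : M × G, if bS P b = p then star (F (bstar P b)) else 0 := rfl
    _ = ∑ b : M × G, if bS P (bstar P b) = p
          then star (F (bstar P (bstar P b))) else 0 :=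
        (Fintype.sum_equiv e
          (fun b => if bS P (bstar P b) = p then star (F (bstar P (bstar P b))) else 0)
          (fun b => if bS P b = p then star (F (bstar P b)) else 0)
          (fun b => rfl)).symm
    _ = ∑ b : M × G, if bS P b = bstar P p then star (F b) else 0 := by
        refine Finset.sum_congr rfl fun b _ => ?_
        rw [aux_bstar_invol hP]
        obtain ⟨s, u⟩ := b
        rw [aux_bS_bstar hP, ← aux_bstar_bS hP]
        refine if_congr ⟨fun h => ?_, fun h => ?_⟩ rfl rfl
        · rw [← h, aux_bstar_invol hP]
        · rw [h, aux_bstar_invol hP]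
    _ = starH P (SH P F) p := by
        simp only [starH, SH, star_sum]
        refine Finset.sum_congr rfl fun b _ => ?_
        rw [apply_ite star, star_zero]
end

section
/- For finite almost groups in a matched pair, the pairing ⟨δ_s⊗u, t⊗δ_v⟩ = δ_{s,t}δ_{u,v} makes the antipodes of H' = k(M) ⋊ kG and H = kM ⋉ k(G) adjoint: ⟨S(δ_s⊗u), t⊗δ_v⟩ = ⟨δ_s⊗u, S(t⊗δ_v)⟩ for all s,t ∈ M and u,v ∈ G. -/
/-- For finite almost groups in a matched pair, with the pairing
`⟨δ_s ⊗ u, t ⊗ δ_v⟩ = δ_{s,t} δ_{u,v}`, the antipodes of `H' = k(M) ⋊ kG` and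
`H = kM ⋉ k(G)` are adjoint: `⟨S(δ_s ⊗ u), t ⊗ δ_v⟩ = ⟨δ_s ⊗ u, S(t ⊗ δ_v)⟩`,
where `S(δ_s ⊗ u) = δ_{(s◁u)^i} ⊗ (s▷u)^i` and `S(t ⊗ δ_v) = (t◁v)^i ⊗ δ_{(t▷v)^i}`. -/
theorem bicross_antipodes_adjoint {G M k : Type*} [Fintype G] [Fintype M]
    [DecidableEq G] [DecidableEq M] [Field k] (P : MatchedPairData G M)
    (hP : IsMatchedPair P) (s t : M) (u v : G) :
    (if (P.DM.inv (P.coact s u), P.DG.inv (P.act s u)) = (t, v) then (1 : k) else 0) =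
      (if (s, u) = (P.DM.inv (P.coact t v), P.DG.inv (P.act t v)) then (1 : k) else 0) := by

  have key : ∀ (s t : M) (u v : G),
      (P.DM.inv (P.coact s u), P.DG.inv (P.act s u)) = (t, v) →
      (s, u) = (P.DM.inv (P.coact t v), P.DG.inv (P.act t v)) := by
    intro s t u v h
    obtain ⟨ht, hv⟩ := Prod.mk.injEq .. ▸ h
    subst ht; subst hv
    rw [hP.inv_coact, hP.inv_act, hP.almostGroup_M.inv_inv, hP.almostGroup_G.inv_inv]
  by_cases h : (P.DM.inv (P.coact s u), P.DG.inv (P.act s u)) = (t, v)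
  · rw [if_pos h, if_pos (key s t u v h)]
  · rw [if_neg h, if_neg]
    intro h2
    exact h (by have := key t s v u h2.symm; exact this.symm)
end
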